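/- arXiv:1610.05107 — 2 statements merged into one kernel-verified Lean document; each statement's English description precedes it below -/
import Mathlib

section
/- Fix an integer m ≥ 2, k ∈ ℕ and n ∈ ℕ. Let r ∈ {0,…,m−1} be the unique integer such that ε_{k−1}(n) = ε_{k−2}(n) = ⋯ = ε_{k−r}(n) = 1 and ε_{k−r−1}(n) = 0 (such r exists since no m consecutive digits of the greedy expansion equal 1), and set μ_k = Σ_{j=0}^{k−1} ε_{k−1−j}(n) φ_m^j. Then μ_k/φ_m^k ≤ V_{φ_m}(n) < (μ_k + φ_m^r − Σ_{i=0}^{r−1} φ_m^i)/φ_m^k. -/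
open MeasureTheory Filter Set

namespace Mbon

/-- The `m`-bonacci sequence `F m`. -/
noncomputable def F (m : ℕ) : ℕ → ℕ := fun k =>
  Nat.strongRecOn k fun k ih =>
    if h : k < m then 2 ^ k
    else ∑ j ∈ (Finset.range m).attach,
      ih (k - (j : ℕ) - 1) (by have := Finset.mem_range.mp j.2; omega)

/-- `ε : ℕ → ℕ` is the (unique) greedy digit string of `n` in the `m`-bonacci
numeration system: digits in `{0,1}`, finitely many nonzero digits, no `m`
consecutive digits all equal to `1`, and the digits represent `n`. -/
def IsGreedy (m n : ℕ) (ε : ℕ → ℕ) : Prop :=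
  (∀ j, ε j ≤ 1) ∧
  (∀ j, ¬ (∀ i, i < m → ε (j + i) = 1)) ∧
  (∃ J, (∀ j, J ≤ j → ε j = 0) ∧ n = ∑ j ∈ Finset.range J, ε j * F m j)

/-- digits indexed by `ℤ`, with the convention `ε_j = 0` for `j < 0`. -/
def digZ (ε : ℕ → ℕ) (j : ℤ) : ℕ := if 0 ≤ j then ε j.toNat else 0

/-- `r` is such that `ε_{k-1} = ⋯ = ε_{k-r} = 1` and `ε_{k-r-1} = 0`. -/
def RunLen (m : ℕ) (ε : ℕ → ℕ) (k r : ℕ) : Prop :=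
  r < m ∧ (∀ i : ℕ, 1 ≤ i → i ≤ r → digZ ε ((k : ℤ) - i) = 1) ∧
    digZ ε ((k : ℤ) - r - 1) = 0

/-- `φ` is the `m`-bonacci number: the real root `> 1` of `x^m = x^{m-1}+⋯+x+1`. -/
def IsPhi (m : ℕ) (φ : ℝ) : Prop := 1 < φ ∧ φ ^ m = ∑ i ∈ Finset.range m, φ ^ i

/-- the `φ`-adic van der Corput value `V_φ(n) = Σ_j ε_j(n) φ^{-j-1}`. -/
noncomputable def VdC (φ : ℝ) (ε : ℕ → ℕ) : ℝ := ∑' j : ℕ, (ε j : ℝ) * φ ^ (-(j : ℤ) - 1)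

/-- `μ_k = Σ_{j=0}^{k-1} ε_{k-1-j} φ^j`. -/
noncomputable def muk (φ : ℝ) (ε : ℕ → ℕ) (k : ℕ) : ℝ :=
  ∑ j ∈ Finset.range k, (ε (k - 1 - j) : ℝ) * φ ^ j

/-- `ν_k = Σ_{j=0}^{k-1} ε_j F_j^{(m)}`. -/
noncomputable def nuk (m : ℕ) (ε : ℕ → ℕ) (k : ℕ) : ℕ := ∑ j ∈ Finset.range k, ε j * F m j

/-- The substitution `σ_m` on the alphabet `Fin m` (`0`-based; the letter `i+1`
of the paper corresponds to `i : Fin m`): `σ(i) = 1(i+1)` for `i < m`, `σ(m) = 1`. -/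
def sub {m : ℕ} (i : Fin m) : List (Fin m) :=
  if h : (i : ℕ) + 1 < m then [⟨0, i.pos⟩, ⟨(i : ℕ) + 1, h⟩] else [⟨0, i.pos⟩]

/-- extension of `σ_m` to words. -/
def subw {m : ℕ} (w : List (Fin m)) : List (Fin m) := w.flatMap sub

/-- `σ_m^k(1)`, a prefix of the infinite fixed point of `σ_m`. -/
def fixWord (m : ℕ) (k : ℕ) : List (Fin m) :=
  subw^[k] (if h : 0 < m then [⟨0, h⟩] else [])

/-- abelianization `l(w)` of a word, as a vector in `ℝ^m`. -/
noncomputable def ab {m : ℕ} (w : List (Fin m)) : Fin m → ℝ := fun i => (w.count i : ℝ)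

/-- The incidence matrix `B_m` of `σ_m`; its `(i,j)` entry is `|σ_m(j)|_i`. -/
noncomputable def B (m : ℕ) : Matrix (Fin m) (Fin m) ℝ :=
  Matrix.of fun i j => ((sub j).count i : ℝ)

/-- `u` is a right eigenvector of `B_m` for the eigenvalue `φ`. -/
def IsRightEv (m : ℕ) (φ : ℝ) (u : Fin m → ℝ) : Prop := u ≠ 0 ∧ (B m).mulVec u = φ • u

/-- `v` is a left eigenvector of `B_m` for the eigenvalue `φ`. -/
def IsLeftEv (m : ℕ) (φ : ℝ) (v : Fin m → ℝ) : Prop := v ≠ 0 ∧ (B m).vecMul v = φ • v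

/-- the projection `π_c` onto `v^⊥` along `u`. -/
noncomputable def proj {m : ℕ} (u v : Fin m → ℝ) (x : Fin m → ℝ) : Fin m → ℝ :=
  x - ((∑ i, v i * x i) / (∑ i, v i * u i)) • u

/-- the hyperplane `v^⊥ = {x : ⟨v,x⟩ = 0}`. -/
def vperp {m : ℕ} (v : Fin m → ℝ) : Set (Fin m → ℝ) := {x | ∑ i, v i * x i = 0}

/-- standard basis vector `e_{i+1}` of `ℝ^m`. -/
def stdb {m : ℕ} (i : Fin m) : Fin m → ℝ := Pi.single i 1

/-- the first standard basis vector `e_1` of `ℝ^m`. -/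
def e1 (m : ℕ) : Fin m → ℝ := fun j => if (j : ℕ) = 0 then 1 else 0

/-- the lattice `L_m = ⟨π_c(e_1-e_2),…,π_c(e_1-e_m)⟩_ℤ`. -/
def latt {m : ℕ} (u v : Fin m → ℝ) : AddSubgroup (Fin m → ℝ) :=
  AddSubgroup.closure {x | ∃ i : Fin m, (i : ℕ) ≠ 0 ∧ x = proj u v (e1 m - stdb i)}

/-- a fundamental mesh of the lattice `L_m`. -/
def mesh {m : ℕ} (u v : Fin m → ℝ) : Set (Fin m → ℝ) :=
  {x | ∃ t : Fin m → ℝ, (∀ i, 0 ≤ t i ∧ t i < 1) ∧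
    x = ∑ i ∈ Finset.univ.filter (fun i : Fin m => (i : ℕ) ≠ 0),
      t i • proj u v (e1 m - stdb i)}

/-- the Lebesgue measure `λ_v` on `v^⊥`, normalized so that a fundamental mesh of
`L_m` has measure `1` (realized as normalized `(m-1)`-dimensional Hausdorff measure). -/
noncomputable def lamv (m : ℕ) (u v : Fin m → ℝ) : Measure (Fin m → ℝ) :=
  (μH[(m : ℝ) - 1] (mesh u v))⁻¹ • μH[(m : ℝ) - 1]

/-- the subtile `R_m(i)` of the Rauzy fractal. -/
noncomputable def Rtile {m : ℕ} (u v : Fin m → ℝ) (i : Fin m) : Set (Fin m → ℝ) :=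
  closure {x | ∃ (k : ℕ) (p s : List (Fin m)),
    fixWord m k = p ++ i :: s ∧ x = proj u v (ab p)}

/-- the Rauzy fractal `R_m` of `σ_m`. -/
noncomputable def Rfrac {m : ℕ} (u v : Fin m → ℝ) : Set (Fin m → ℝ) :=
  closure {x | ∃ (k : ℕ) (p s : List (Fin m)),
    fixWord m k = p ++ s ∧ x = proj u v (ab p)}

/-- interior of `A` relative to the subspace `V`. -/
def relInterior {X : Type*} [TopologicalSpace X] (V A : Set X) : Set X :=
  Subtype.val '' interior (Subtype.val ⁻¹' A : Set V)

/-- boundary of `A` relative to the subspace `V`. -/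
def relFrontier {X : Type*} [TopologicalSpace X] (V A : Set X) : Set X :=
  Subtype.val '' frontier (Subtype.val ⁻¹' A : Set V)

/-- minimal number of sets of diameter `≤ δ` needed to cover `A`. -/
noncomputable def coverNum {X : Type*} [PseudoMetricSpace X] (A : Set X) (δ : ℝ) : ℕ :=
  sInf {n : ℕ | ∃ f : Fin n → Set X, (∀ i, Metric.diam (f i) ≤ δ) ∧ A ⊆ ⋃ i, f i}

/-- the (upper) box counting dimension. -/
noncomputable def dimB {X : Type*} [PseudoMetricSpace X] (A : Set X) : ℝ :=
  Filter.limsup (fun δ : ℝ => Real.log (coverNum A δ) / Real.log (1 / δ))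
    (nhdsWithin 0 (Set.Ioi 0))

/-- the one-dimensional star discrepancy `D_N`. -/
noncomputable def starDisc1 (y : ℕ → ℝ) (N : ℕ) : ℝ :=
  sSup {d : ℝ | ∃ ω : ℝ, 0 < ω ∧ ω ≤ 1 ∧
    d = |(∑ n ∈ Finset.range N,
        Set.indicator (Set.Ico 0 ω) (fun _ => (1 : ℝ)) (y n)) / N - ω|}

/-- the `s`-dimensional star discrepancy `D_N`. -/
noncomputable def starDisc {s : ℕ} (y : ℕ → Fin s → ℝ) (N : ℕ) : ℝ :=
  sSup {d : ℝ | ∃ ω : Fin s → ℝ, (∀ i, 0 < ω i ∧ ω i ≤ 1) ∧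
    d = |(∑ n ∈ Finset.range N,
        Set.indicator (Set.univ.pi fun i => Set.Ico (0 : ℝ) (ω i)) (fun _ => (1 : ℝ)) (y n)) / N -
      ∏ i, ω i|}

/-- `i_0 →^{p_0} i_1 →^{p_1} ⋯ →^{p_{k-1}} i_k` is a walk of length `k` in the
prefix-suffix graph `G_{σ_m}`: for each step there is an edge from `i_t` to
`i_{t+1}` labelled `(p_t, i_t, s_t)`, i.e. `σ_m(i_{t+1}) = p_t i_t s_t`. -/
def IsWalk {m : ℕ} (k : ℕ) (i : Fin (k + 1) → Fin m) (p : Fin k → List (Fin m)) : Prop :=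
  ∀ t : Fin k, ∃ s : List (Fin m), sub (i t.succ) = p t ++ i t.castSucc :: s

/-- the collection `S_k^{(m)}` of level-`k` subtiles
`B_m^k R_m(i_k) + π_c l(σ_m^{k-1}(p_{k-1})⋯σ_m(p_1)p_0)` of the Rauzy fractal. -/
noncomputable def levelTiles (m k : ℕ) (u v : Fin m → ℝ) : Set (Set (Fin m → ℝ)) :=
  {S | ∃ (i : Fin (k + 1) → Fin m) (p : Fin k → List (Fin m)), IsWalk k i p ∧
    S = (fun x => (B m ^ k).mulVec x +
          ∑ t : Fin k, proj u v (ab (subw^[(t : ℕ)] (p t)))) '' Rtile u v (i (Fin.last k))}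

/-- the saturation `S + L_m` of a set `S` by the lattice `L_m`. -/
def satur {m : ℕ} (u v : Fin m → ℝ) (S : Set (Fin m → ℝ)) : Set (Fin m → ℝ) :=
  {x | ∃ y ∈ S, ∃ l ∈ latt u v, x = y + l}

/-! Put `β = φ⁻¹`, so that `V(n) = Σ_j ε_j β^{j+1}` and `Σ_{j<m} β^{j+1} = 1`. Splitting the
series after the first `k` digits gives `V(n) = μ_k/φ^k + β^k T`, where `T` is the value of the
shifted digit string `ε_k ε_{k+1} ⋯`. Since `ε_{k-r} = ⋯ = ε_{k-1} = 1`, the window of length `m`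
starting at `k - r` forces a zero among `ε_k, …, ε_{k+m-r-1}`. A digit string with no `m`
consecutive ones and a zero at position `s` has value `< Σ_{j≤s} β^{j+1}` (induction on the
length, peeling off the leading digit), so `0 ≤ T < Σ_{j<m-r} β^{j+1} = φ^r - Σ_{i<r} φ^i`. -/

lemma zpow_neg_natCast_sub_one (φ : ℝ) (j : ℕ) : φ ^ (-(j : ℤ) - 1) = φ⁻¹ ^ (j + 1) := by
  rw [show -(j : ℤ) - 1 = -((j + 1 : ℕ) : ℤ) by push_cast; ring, zpow_neg, zpow_natCast, inv_pow]

lemma pow_sub_geom_sum_eq_sum_inv_pow {φ : ℝ} (hφ : φ ≠ 0) {m : ℕ}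
    (hm : φ ^ m = ∑ i ∈ Finset.range m, φ ^ i) {r d : ℕ} (hrd : r + d = m) :
    φ ^ r - ∑ i ∈ Finset.range r, φ ^ i = ∑ j ∈ Finset.range d, φ⁻¹ ^ (j + 1) := by
  induction d generalizing r with
  | zero => subst hrd; simpa [sub_eq_zero] using hm
  | succ d ih =>
    have h := ih (r := r + 1) (by omega)
    rw [Finset.sum_range_succ']
    simp only [pow_succ φ⁻¹ (_ + 1), ← Finset.sum_mul]
    rw [← h, Finset.sum_range_succ', pow_succ]
    simp only [pow_succ, ← Finset.sum_mul]
    field_simp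
    ring

lemma sum_digit_mul_pow_lt {β : ℝ} (hβ : 0 < β) {m : ℕ}
    (hm : ∑ j ∈ Finset.range m, β ^ (j + 1) ≤ 1) {δ : ℕ → ℕ} (hδ : ∀ j, δ j ≤ 1)
    (hwin : ∀ j, ∃ i < m, δ (j + i) = 0) (N : ℕ) {s : ℕ} (hs : δ s = 0) :
    ∑ j ∈ Finset.range N, (δ j : ℝ) * β ^ (j + 1) < ∑ j ∈ Finset.range (s + 1), β ^ (j + 1) := by
  induction N generalizing δ s with
  | zero => exact Finset.sum_pos (fun j _ => pow_pos hβ _) Finset.nonempty_range_add_one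
  | succ N ih =>
    have hshift : ∀ s', δ (s' + 1) = 0 → ∑ j ∈ Finset.range N, (δ (j + 1) : ℝ) * β ^ (j + 1) <
        ∑ j ∈ Finset.range (s' + 1), β ^ (j + 1) := fun s' hs' =>
      ih (δ := fun j => δ (j + 1)) (fun j => hδ _)
        (fun j => by simpa [Nat.add_right_comm] using hwin (j + 1)) hs'
    rw [Finset.sum_range_succ']
    simp only [pow_succ _ (_ + 1), ← mul_assoc, ← Finset.sum_mul, zero_add, pow_one]
    obtain _ | s := s
    · obtain ⟨s', hs'm, hs'⟩ := hwin 1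
      have hle : ∑ j ∈ Finset.range (s' + 1), β ^ (j + 1) ≤ 1 :=
        (Finset.sum_le_sum_of_subset_of_nonneg (Finset.range_subset_range.2 hs'm)
          fun j _ _ => (pow_pos hβ _).le).trans hm
      have hlt := hshift s' (by rwa [add_comm])
      simp only [hs, Nat.cast_zero, zero_mul, add_zero, zero_add, Finset.sum_range_one, pow_one]
      nlinarith
    · have hlt := hshift s hs
      rw [Finset.sum_range_succ', zero_add, pow_one]
      simp only [pow_succ _ (_ + 1), ← Finset.sum_mul]
      have : (δ 0 : ℝ) ≤ 1 := by exact_mod_cast hδ 0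
      nlinarith

lemma IsGreedy.exists_eq_zero {m n : ℕ} {ε : ℕ → ℕ} (hε : IsGreedy m n ε) (j : ℕ) :
    ∃ i < m, ε (j + i) = 0 := by
  obtain ⟨i, him, hi⟩ := not_forall₂.1 (hε.2.1 j)
  exact ⟨i, him, by have := hε.1 (j + i); omega⟩

lemma RunLen.exists_eq_zero {m n k r : ℕ} {ε : ℕ → ℕ} (hε : IsGreedy m n ε)
    (hr : RunLen m ε k r) : ∃ s, s + r < m ∧ ε (k + s) = 0 := by
  obtain ⟨-, hrun, -⟩ := hr
  have hrk : r ≤ k := by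
    by_contra! hkr
    have := hrun r (by omega) le_rfl
    rw [digZ, if_neg (by omega)] at this
    exact zero_ne_one this
  obtain ⟨i, him, hi⟩ := hε.exists_eq_zero (k - r)
  have hri : r ≤ i := by
    by_contra! hir
    have := hrun (r - i) (by omega) (by omega)
    rw [digZ, if_pos (by omega), show ((k : ℤ) - (r - i : ℕ)).toNat = k - r + i by omega] at this
    omega
  exact ⟨i - r, by omega, by rwa [show k + (i - r) = k - r + i by omega]⟩

lemma VdC_eq_sum {φ : ℝ} {ε : ℕ → ℕ} {J : ℕ} (hJ : ∀ j, J ≤ j → ε j = 0) :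
    VdC φ ε = ∑ j ∈ Finset.range J, (ε j : ℝ) * φ⁻¹ ^ (j + 1) := by
  rw [VdC, tsum_eq_sum (s := Finset.range J) fun j hj => by
    simp [hJ j (by simpa using hj)]]
  simp only [zpow_neg_natCast_sub_one]

lemma muk_div_pow {φ : ℝ} (hφ : φ ≠ 0) (ε : ℕ → ℕ) (k : ℕ) :
    muk φ ε k / φ ^ k = ∑ j ∈ Finset.range k, (ε j : ℝ) * φ⁻¹ ^ (j + 1) := by
  induction k with
  | zero => simp [muk]
  | succ k ih =>
    have horner : muk φ ε (k + 1) = φ * muk φ ε k + ε k := by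
      rw [muk, muk, Finset.sum_range_succ', Finset.mul_sum]
      simp only [Nat.add_sub_cancel, Nat.sub_zero, pow_zero, mul_one]
      congr 1
      refine Finset.sum_congr rfl fun j _ => ?_
      rw [show k - (j + 1) = k - 1 - j by omega, pow_succ]
      ring
    rw [horner, Finset.sum_range_succ, ← ih, inv_pow, pow_succ]
    field_simp

lemma VdC_eq_muk_div_add {φ : ℝ} (hφ : φ ≠ 0) {ε : ℕ → ℕ} (k : ℕ) {J : ℕ}
    (hJ : ∀ j, J ≤ j → ε j = 0) :
    VdC φ ε = muk φ ε k / φ ^ k +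
      φ⁻¹ ^ k * ∑ j ∈ Finset.range J, (ε (k + j) : ℝ) * φ⁻¹ ^ (j + 1) := by
  rw [VdC_eq_sum (J := k + J) fun j hj => hJ j (by omega), Finset.sum_range_add,
    muk_div_pow hφ, Finset.mul_sum]
  congr 1
  refine Finset.sum_congr rfl fun j _ => ?_
  ring

theorem stmt0_general (m : ℕ) (k n r : ℕ) (φ : ℝ) (hφ : IsPhi m φ)
    (ε : ℕ → ℕ) (hε : IsGreedy m n ε) (hr : RunLen m ε k r) :
    muk φ ε k / φ ^ k ≤ VdC φ ε ∧
      VdC φ ε < (muk φ ε k + φ ^ r - ∑ i ∈ Finset.range r, φ ^ i) / φ ^ k := by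
  obtain ⟨hφ1, hφm⟩ := hφ
  have hφ0 : φ ≠ 0 := by positivity
  have hβ : 0 < φ⁻¹ := by positivity
  obtain ⟨J, hJ, -⟩ := hε.2.2
  set T := ∑ j ∈ Finset.range J, (ε (k + j) : ℝ) * φ⁻¹ ^ (j + 1)
  have hsplit := VdC_eq_muk_div_add hφ0 k hJ
  have hT0 : 0 ≤ T := Finset.sum_nonneg fun j _ => by positivity
  have hT : T < φ ^ r - ∑ i ∈ Finset.range r, φ ^ i := by
    obtain ⟨s, hsr, hs⟩ := hr.exists_eq_zero hε
    have hβm := pow_sub_geom_sum_eq_sum_inv_pow hφ0 hφm (zero_add m)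
    simp only [pow_zero, Finset.range_zero, Finset.sum_empty, sub_zero] at hβm
    rw [pow_sub_geom_sum_eq_sum_inv_pow hφ0 hφm (Nat.add_sub_of_le hr.1.le)]
    refine (sum_digit_mul_pow_lt hβ hβm.ge (fun j => hε.1 _)
      (fun j => by simpa [add_assoc] using hε.exists_eq_zero (k + j)) J hs).trans_le ?_
    exact Finset.sum_le_sum_of_subset_of_nonneg
      (Finset.range_subset_range.2 (by omega : s + 1 ≤ m - r)) fun j _ _ => (pow_pos hβ _).le
  have hβk : 0 < φ⁻¹ ^ k := by positivity
  rw [hsplit, add_sub_assoc, add_div, div_eq_inv_mul (_ - _), ← inv_pow]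
  exact ⟨le_add_of_nonneg_right (mul_nonneg hβk.le hT0), by gcongr⟩

/-- Proposition 3.1 (1): the van der Corput value `V_{φ_m}(n)` lies in
`[μ_k/φ_m^k, (μ_k + φ_m^r - Σ_{i<r} φ_m^i)/φ_m^k)`. -/
theorem stmt0 (m : ℕ) (hm : 2 ≤ m) (k n r : ℕ) (φ : ℝ) (hφ : IsPhi m φ)
    (ε : ℕ → ℕ) (hε : IsGreedy m n ε) (hr : RunLen m ε k r) :
    muk φ ε k / φ ^ k ≤ VdC φ ε ∧
      VdC φ ε < (muk φ ε k + φ ^ r - ∑ i ∈ Finset.range r, φ ^ i) / φ ^ k :=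
  stmt0_general m k n r φ hφ ε hε hr

end Mbon
end

section
/- Fix an integer m ≥ 2, k ∈ ℕ and n ∈ ℕ. Let r ∈ {0,…,m−1} be the unique integer such that ε_{k−1}(n) = ⋯ = ε_{k−r}(n) = 1 and ε_{k−r−1}(n) = 0, and set ν_k = Σ_{j=0}^{k−1} ε_j(n) F_j^{(m)}. Then n·π_c(e_1) ∈ ν_k·π_c(e_1) + B_m^k(⋃_{i=1}^{m−r} R_m(i)) + L_m, i.e. there exist i ∈ {1,…,m−r}, a point x ∈ R_m(i) and a lattice element λ ∈ L_m with n·π_c(e_1) = ν_k·π_c(e_1) + B_m^k x + λ. -/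
open MeasureTheory Filter Set

namespace Mbon

/-!
Write `n = ν_k + Σ_j ε_{k+j} F_{k+j}`. The shifted digits `ε_{k+j}` read, à la Dumont–Thomas, a
prefix `p` of `σ^J(1)`; the letter `i` that follows `p` is `1 +` the number of ones at the bottom of
the shifted digits, and since the greedy expansion has no `m` consecutive ones while `ε_{k-1}, …,
ε_{k-r}` are already ones, `i ≤ m - r`; thus `π_c l(p) ∈ R_m(i)`. The word `w = σ^k(p)` has
abelianization `B_m^k l(p)` and length `n - ν_k` (because `|σ^j(1)| = F_j`), and
`|w| π_c(e_1) - π_c l(w)` is a sum of generators `π_c(e_1 - e_a)` of `L_m`. As `π_c` commutes with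
`B_m`, this is the required lattice element.
-/

section Fibonacci

theorem F_eq (m k : ℕ) :
    F m k = if k < m then 2 ^ k else ∑ j ∈ Finset.range m, F m (k - j - 1) := by
  rw [F, Nat.strongRecOn, WellFounded.fix_eq]
  split_ifs
  · rfl
  · exact Finset.sum_attach (Finset.range m) (fun j => F m (k - j - 1))

theorem F_of_lt {m k : ℕ} (h : k < m) : F m k = 2 ^ k := by
  rw [F_eq, if_pos h]

theorem F_of_le {m k : ℕ} (h : m ≤ k) : F m k = ∑ j ∈ Finset.range m, F m (k - j - 1) := by
  rw [F_eq, if_neg (not_lt.2 h)]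

/-- `F_m` extended to negative indices by `F_{-1} = 1` and `F_j = 0` for `j ≤ -2`: these are the
values that make the `m`-term recurrence hold at every index `k ≥ 0`. -/
noncomputable def Fext (m : ℕ) (k : ℤ) : ℕ :=
  if 0 ≤ k then F m k.toNat else if k = -1 then 1 else 0

theorem Fext_natCast (m k : ℕ) : Fext m k = F m k := by simp [Fext]

theorem Fext_rec {m : ℕ} {k : ℤ} (hk : 0 ≤ k) :
    Fext m k = ∑ t ∈ Finset.range m, Fext m (k - 1 - t) := by
  lift k to ℕ using hk
  rw [Fext_natCast]
  rcases le_or_gt m k with hkm | hkm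
  · rw [F_of_le hkm]
    refine Finset.sum_congr rfl fun t ht => ?_
    rw [← Fext_natCast]
    congr 1
    simp only [Finset.mem_range] at ht
    omega
  · obtain ⟨d, hd⟩ := Nat.exists_eq_add_of_le hkm
    have hhead : ∀ t ∈ Finset.range k, Fext m (k - 1 - t) = 2 ^ (k - 1 - t) := fun t ht => by
      simp only [Finset.mem_range] at ht
      rw [show (k : ℤ) - 1 - t = ((k - 1 - t : ℕ) : ℤ) by omega, Fext_natCast, F_of_lt (by omega)]
    have hlast : Fext m (k - 1 - k) = 1 := by simp [Fext]
    have htail : ∀ t ∈ Finset.range d, Fext m (k - 1 - ↑(k + 1 + t)) = 0 := fun t _ => by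
      rw [Fext, if_neg (by omega), if_neg (by omega)]
    rw [F_of_lt hkm, show Finset.range m = Finset.range (k + 1 + d) by rw [hd],
      Finset.sum_range_add, Finset.sum_range_succ, Finset.sum_congr rfl hhead, hlast,
      Finset.sum_congr rfl htail, Finset.sum_const_zero, add_zero,
      Finset.sum_range_reflect (2 ^ ·) k]
    have := geom_sum_mul_add 1 k
    norm_num at this
    omega

end Fibonacci

section Words

variable {m : ℕ}

theorem subw_append (w₁ w₂ : List (Fin m)) : subw (w₁ ++ w₂) = subw w₁ ++ subw w₂ :=
  List.flatMap_append

theorem subw_cons (a : Fin m) (w : List (Fin m)) : subw (a :: w) = sub a ++ subw w :=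
  List.flatMap_cons

theorem fixWord_zero (hm : 0 < m) : fixWord m 0 = [⟨0, hm⟩] := by
  simp [fixWord, hm]

theorem fixWord_succ (j : ℕ) : fixWord m (j + 1) = subw (fixWord m j) :=
  Function.iterate_succ_apply' ..

theorem fixWord_add (k j : ℕ) : fixWord m (k + j) = subw^[k] (fixWord m j) := by
  rw [fixWord, fixWord, Function.iterate_add_apply]

theorem count_sub_zero (hm : 0 < m) (a : Fin m) : (sub a).count ⟨0, hm⟩ = 1 := by
  unfold sub; split_ifs <;> simp [Fin.ext_iff]

theorem count_sub_succ {i : ℕ} (hi : i + 1 < m) (a : Fin m) :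
    (sub a).count ⟨i + 1, hi⟩ = if (a : ℕ) = i then 1 else 0 := by
  unfold sub; split_ifs <;> simp [List.count_cons, Fin.ext_iff] <;> omega

theorem count_subw_zero (hm : 0 < m) (w : List (Fin m)) :
    (subw w).count ⟨0, hm⟩ = w.length := by
  induction w with
  | nil => rfl
  | cons a w ih => rw [subw_cons, List.count_append, count_sub_zero, ih, List.length_cons, add_comm]

theorem count_subw_succ {i : ℕ} (hi : i + 1 < m) (w : List (Fin m)) :
    (subw w).count ⟨i + 1, hi⟩ = w.count ⟨i, by omega⟩ := by
  induction w with
  | nil => rfl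
  | cons a w ih =>
    rw [subw_cons, List.count_append, count_sub_succ, ih, List.count_cons]
    simp [Fin.ext_iff, add_comm]

theorem sum_count_eq_length {α : Type*} [DecidableEq α] [Fintype α] (w : List α) :
    ∑ a, w.count a = w.length := by
  simpa using Multiset.sum_count_eq_card (s := Finset.univ) (m := (w : Multiset α)) (by simp)

theorem count_fixWord (hm : 0 < m) (j : ℕ) (i : Fin m) :
    (fixWord m j).count i = Fext m (j - 1 - i) := by
  induction j generalizing i with
  | zero =>
    rw [fixWord_zero hm, List.count_singleton, Fext]
    split_ifs <;> simp_all [Fin.ext_iff]; omega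
  | succ j ih =>
    rw [fixWord_succ]
    rcases i with ⟨_ | i, hi⟩
    · rw [count_subw_zero, ← sum_count_eq_length, Finset.sum_congr rfl fun i _ => ih i,
        Fin.sum_univ_eq_sum_range (fun i => Fext m (j - 1 - i)), ← Fext_rec (by positivity)]
      congr 1; push_cast; ring
    · rw [count_subw_succ, ih]
      congr 1; push_cast; ring

theorem length_fixWord (hm : 0 < m) (j : ℕ) : (fixWord m j).length = F m j := by
  rw [← sum_count_eq_length, Finset.sum_congr rfl fun i _ => count_fixWord hm j i,
    Fin.sum_univ_eq_sum_range (fun i => Fext m (j - 1 - i)), ← Fext_natCast,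
    Fext_rec (by positivity)]

end Words

section Abelianization

variable {m : ℕ}

theorem ab_nil : ab ([] : List (Fin m)) = 0 := by
  ext; simp [ab]

theorem ab_cons (a : Fin m) (w : List (Fin m)) : ab (a :: w) = stdb a + ab w := by
  ext i
  simp [ab, stdb, List.count_cons, Pi.single_apply, add_comm, @eq_comm _ a]

theorem ab_append (w₁ w₂ : List (Fin m)) : ab (w₁ ++ w₂) = ab w₁ + ab w₂ := by
  ext; simp [ab]

theorem ab_subw (w : List (Fin m)) : ab (subw w) = (B m).mulVec (ab w) := by
  induction w with
  | nil => simp [ab_nil, subw]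
  | cons a w ih =>
    ext i
    rw [subw_cons, ab_cons, Matrix.mulVec_add, ← ih, stdb, Matrix.mulVec_single_one]
    simp [ab, B, List.count_append]

theorem ab_iterate_subw (k : ℕ) (w : List (Fin m)) :
    ab (subw^[k] w) = (B m ^ k).mulVec (ab w) := by
  induction k with
  | zero => simp
  | succ k ih => rw [Function.iterate_succ_apply', ab_subw, ih, Matrix.mulVec_mulVec, pow_succ']

theorem sum_ab (w : List (Fin m)) : ∑ i, ab w i = w.length := by
  simp only [ab]
  exact_mod_cast sum_count_eq_length w

end Abelianization

section Projection

variable {m : ℕ} (u v : Fin m → ℝ)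

theorem proj_add (x y : Fin m → ℝ) : proj u v (x + y) = proj u v x + proj u v y := by
  simp only [proj, Pi.add_apply, mul_add, Finset.sum_add_distrib, add_div, add_smul]
  abel

theorem proj_smul (c : ℝ) (x : Fin m → ℝ) : proj u v (c • x) = c • proj u v x := by
  simp only [proj, Pi.smul_apply, smul_eq_mul, mul_left_comm _ c, ← Finset.mul_sum, mul_div_assoc,
    smul_sub, smul_smul]

theorem proj_sub (x y : Fin m → ℝ) : proj u v (x - y) = proj u v x - proj u v y := by
  rw [sub_eq_add_neg, ← neg_one_smul ℝ y, proj_add, proj_smul, neg_one_smul, sub_eq_add_neg]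

theorem mulVec_proj {M : Matrix (Fin m) (Fin m) ℝ} {c : ℝ} (hu : M.mulVec u = c • u)
    (hv : M.vecMul v = c • v) (x : Fin m → ℝ) :
    M.mulVec (proj u v x) = proj u v (M.mulVec x) := by
  have hvM : ∑ i, v i * M.mulVec x i = c * ∑ i, v i * x i := by
    simpa [dotProduct, hv, Finset.mul_sum, mul_assoc] using Matrix.dotProduct_mulVec v M x
  rw [proj, proj, hvM, Matrix.mulVec_sub, Matrix.mulVec_smul, hu, smul_smul, mul_div_assoc,
    mul_comm]

theorem pow_mulVec_proj {φ : ℝ} (hu : IsRightEv m φ u) (hv : IsLeftEv m φ v) (k : ℕ)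
    (x : Fin m → ℝ) : (B m ^ k).mulVec (proj u v x) = proj u v ((B m ^ k).mulVec x) := by
  induction k with
  | zero => simp
  | succ k ih => rw [pow_succ', ← Matrix.mulVec_mulVec, ← Matrix.mulVec_mulVec, ih,
      mulVec_proj u v hu.2 hv.2]

theorem proj_sub_stdb_mem_latt (a : Fin m) : proj u v (e1 m - stdb a) ∈ latt u v := by
  by_cases ha : (a : ℕ) = 0
  · have : e1 m = stdb a := by
      ext j
      simp [e1, stdb, Pi.single_apply, Fin.ext_iff, ha]
    simp [this, proj, (latt u v).zero_mem]
  · exact AddSubgroup.subset_closure ⟨a, ha, rfl⟩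

theorem proj_length_smul_sub_ab_mem_latt (w : List (Fin m)) :
    proj u v ((w.length : ℝ) • e1 m - ab w) ∈ latt u v := by
  induction w with
  | nil => simp [ab_nil, proj, (latt u v).zero_mem]
  | cons a w ih =>
    have : ((a :: w).length : ℝ) • e1 m - ab (a :: w) =
        ((w.length : ℝ) • e1 m - ab w) + (e1 m - stdb a) := by
      rw [ab_cons, List.length_cons]; push_cast; module
    rw [this, proj_add]
    exact (latt u v).add_mem ih (proj_sub_stdb_mem_latt u v a)

end Projection

section Prefix

variable {m : ℕ}

theorem ab_subw_eq_sum {J : ℕ} {δ : ℕ → ℕ} {p : List (Fin m)}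
    (hp : ab p = ∑ j ∈ Finset.range J, (δ j : ℝ) • ab (fixWord m j)) :
    ab (subw p) = ∑ j ∈ Finset.range J, (δ j : ℝ) • ab (fixWord m (j + 1)) := by
  simp only [ab_subw, hp, Matrix.mulVec_sum, Matrix.mulVec_smul, fixWord_succ]

/-- Dumont–Thomas: `p` is the concatenation of the blocks `σ^j(1)`, `j = J-1, …, 0`, with
`δ_j = 1`. -/
theorem exists_fixWord_eq_append (hm : 0 < m) (δ : ℕ → ℕ) (hδ : ∀ j, δ j ≤ 1)
    (hrun : ∀ j, ¬ ∀ i, i < m → δ (j + i) = 1) (J : ℕ) :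
    ∃ (s : Fin m) (p tail : List (Fin m)), (∀ j < (s : ℕ), δ j = 1) ∧
      fixWord m J = p ++ s :: tail ∧
      ab p = ∑ j ∈ Finset.range J, (δ j : ℝ) • ab (fixWord m j) := by
  induction J generalizing δ with
  | zero => exact ⟨⟨0, hm⟩, [], [], by simp, fixWord_zero hm, by simp [ab_nil]⟩
  | succ J ih =>
    obtain ⟨s, p, tail, hs, hfix, hab⟩ := ih (fun j => δ (j + 1)) (fun j => hδ _)
      (fun j h => hrun (j + 1) fun i hi => by simpa [Nat.add_right_comm] using h i hi)
    have hfix' : fixWord m (J + 1) = subw p ++ sub s ++ subw tail := by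
      rw [fixWord_succ, hfix, subw_append, subw_cons, List.append_assoc]
    rw [Finset.sum_range_succ', ← ab_subw_eq_sum hab]
    rcases Nat.le_one_iff_eq_zero_or_eq_one.1 (hδ 0) with h0 | h0
    · obtain ⟨rest, hrest⟩ : ∃ rest, sub s = ⟨0, hm⟩ :: rest := by
        unfold sub; split_ifs <;> exact ⟨_, rfl⟩
      exact ⟨⟨0, hm⟩, subw p, rest ++ subw tail, by simp, by simp [hfix', hrest], by simp [h0]⟩
    · have hs1 : (s : ℕ) + 1 < m := by
        by_contra! hsm
        refine hrun 0 fun i hi => ?_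
        cases i with
        | zero => exact h0
        | succ i => simpa [add_comm] using hs i (by omega)
      have hsub : sub s = [⟨0, hm⟩, ⟨s + 1, hs1⟩] := by simp [sub, hs1]
      refine ⟨⟨s + 1, hs1⟩, subw p ++ [⟨0, hm⟩], subw tail, fun j hj => ?_,
        by simp [hfix', hsub], by simp [ab_append, ab_cons, ab_nil, fixWord_zero hm, h0]⟩
      cases j with
      | zero => exact h0
      | succ j => exact hs j (by simpa using hj)

theorem length_iterate_subw_prefix {J : ℕ} (hm : 0 < m) {δ : ℕ → ℕ} {p : List (Fin m)}
    (hp : ab p = ∑ j ∈ Finset.range J, (δ j : ℝ) • ab (fixWord m j)) (k : ℕ) :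
    (subw^[k] p).length = ∑ j ∈ Finset.range J, δ j * F m (k + j) := by
  have hab : ab (subw^[k] p) = ∑ j ∈ Finset.range J, (δ j : ℝ) • ab (fixWord m (k + j)) := by
    simp only [ab_iterate_subw, hp, Matrix.mulVec_sum, Matrix.mulVec_smul, fixWord_add]
  have hsum := congrArg (fun x => ∑ i, x i) hab
  simp only [sum_ab, Finset.sum_apply, Pi.smul_apply, smul_eq_mul] at hsum
  rw [Finset.sum_comm] at hsum
  simp only [← Finset.mul_sum, sum_ab, length_fixWord hm] at hsum
  exact_mod_cast hsum

end Prefix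

theorem RunLen.le {m k r : ℕ} {ε : ℕ → ℕ} (h : RunLen m ε k r) : r ≤ k := by
  by_contra! hkr
  simpa [digZ] using h.2.1 (k + 1) (by omega) hkr

theorem RunLen.eq_one {m k r : ℕ} {ε : ℕ → ℕ} (h : RunLen m ε k r) {j : ℕ} (hj : k - r ≤ j)
    (hjk : j < k) : ε j = 1 := by
  have := h.2.1 (k - j) (by omega) (by have := h.le; omega)
  rwa [digZ, if_pos (by omega), show ((k : ℤ) - ↑(k - j)).toNat = j by omega] at this

theorem sub_lt_of_eq_one {m : ℕ} {ε : ℕ → ℕ} (hrun : ∀ j, ¬ ∀ i, i < m → ε (j + i) = 1)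
    {a b : ℕ} (h : ∀ j, a ≤ j → j < b → ε j = 1) : b - a < m := by
  by_contra! hm
  exact hrun a fun i hi => h _ (by omega) (by omega)

theorem stmt1_general (m : ℕ) (k n r : ℕ) (φ : ℝ)
    (u v : Fin m → ℝ) (hu : IsRightEv m φ u) (hv : IsLeftEv m φ v)
    (ε : ℕ → ℕ) (hε : IsGreedy m n ε) (hr : RunLen m ε k r) :
    ∃ i : Fin m, (i : ℕ) < m - r ∧ ∃ x ∈ Rtile u v i, ∃ l ∈ latt u v,
      (n : ℝ) • proj u v (e1 m) =
        (nuk m ε k : ℝ) • proj u v (e1 m) + (B m ^ k).mulVec x + l := by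
  obtain ⟨hdig, hrun, J, hsupp, hn⟩ := hε
  have hm : 0 < m := Nat.pos_of_ne_zero fun h => hrun 0 (by simp [h])
  obtain ⟨s, p, tail, hs, hfix, hab⟩ := exists_fixWord_eq_append hm (fun j => ε (k + j))
    (fun j => hdig _) (fun j h => hrun (k + j) fun i hi => by simpa [add_assoc] using h i hi) J
  have hsr : (s : ℕ) < m - r := by
    have := sub_lt_of_eq_one hrun (a := k - r) (b := k + s) fun j hj hjs => by
      rcases lt_or_ge j k with hjk | hjk
      · exact hr.eq_one hj hjk
      · simpa [Nat.add_sub_cancel' hjk] using hs (j - k) (by omega)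
    have := hr.le
    omega
  have hlen : n = nuk m ε k + (subw^[k] p).length := by
    rw [length_iterate_subw_prefix hm hab, nuk, ← Finset.sum_range_add, hn]
    exact Finset.sum_subset (Finset.range_subset_range.2 (by omega)) fun j _ hj => by
      simp [hsupp j (by simpa using hj)]
  refine ⟨s, hsr, proj u v (ab p), subset_closure ⟨J, p, tail, hfix, rfl⟩, _,
    proj_length_smul_sub_ab_mem_latt u v (subw^[k] p), ?_⟩
  rw [pow_mulVec_proj u v hu hv, ← ab_iterate_subw, proj_sub, proj_smul, hlen]
  push_cast
  module

/-- Proposition 3.1 (2): `n·π_c(e_1) ∈ ν_k·π_c(e_1) + B_m^k (⋃_{i=1}^{m-r} R_m(i)) + L_m`.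
(Letters are `0`-based: `i : Fin m` corresponds to the letter `i+1`, so the range
`i ∈ {1,…,m-r}` becomes `(i : ℕ) < m - r`.) -/
theorem stmt1 (m : ℕ) (hm : 2 ≤ m) (k n r : ℕ) (φ : ℝ) (hφ : IsPhi m φ)
    (u v : Fin m → ℝ) (hu : IsRightEv m φ u) (hv : IsLeftEv m φ v)
    (ε : ℕ → ℕ) (hε : IsGreedy m n ε) (hr : RunLen m ε k r) :
    ∃ i : Fin m, (i : ℕ) < m - r ∧ ∃ x ∈ Rtile u v i, ∃ l ∈ latt u v,
      (n : ℝ) • proj u v (e1 m) =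
        (nuk m ε k : ℝ) • proj u v (e1 m) + (B m ^ k).mulVec x + l :=
  stmt1_general m k n r φ u v hu hv ε hε hr

end Mbon
end
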